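/- Let c ≥ 1 be a real number, let G : ℕ → ℝ be a sequence and G_∞ ∈ ℝ with G(0) ≥ G_∞, and suppose that for every n ∈ ℕ one has G(n+1) − G_∞ ≤ (1 − 1/(c(n+1))) · (G(n) − G_∞). Then for every natural number n ≥ 1 one has G(n) − G_∞ ≤ n^{-1/c} · (G(0) − G_∞). In particular the error G(n) − G_∞ decreases at least algebraically in n. -/

import Mathlib

/-!
Write `p = 1/c ∈ (0, 1]`. Since `1 - p/m ≤ exp (-p/m) ≤ (1 + 1/m)^(-p)`, one step of the
contraction turns the bound `m^(-p)` into `(m+1)^(-p)`, so by induction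
`G(n) - G∞ ≤ (n+1)^(-p) (G(0) - G∞) ≤ n^(-p) (G(0) - G∞)`.
-/

open Real

theorem one_sub_mul_le_rpow_one_add_neg {s p : ℝ} (hs : -1 < s) (hp : 0 ≤ p) :
    1 - p * s ≤ (1 + s) ^ (-p) := by
  have hlog : log (1 + s) ≤ s := by linarith [log_le_sub_one_of_pos (by linarith : 0 < 1 + s)]
  calc 1 - p * s ≤ exp (-(p * s)) := by linarith [add_one_le_exp (-(p * s))]
    _ ≤ exp (log (1 + s) * -p) := exp_le_exp.mpr (by nlinarith)
    _ = (1 + s) ^ (-p) := (rpow_def_of_pos (by linarith) _).symm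

theorem one_sub_div_mul_rpow_neg_le {m p : ℝ} (hm : 0 < m) (hp : 0 ≤ p) :
    (1 - p / m) * m ^ (-p) ≤ (m + 1) ^ (-p) := by
  have hbern : 1 - p * m⁻¹ ≤ (1 + m⁻¹) ^ (-p) :=
    one_sub_mul_le_rpow_one_add_neg (by linarith [inv_pos.mpr hm]) hp
  calc (1 - p / m) * m ^ (-p) ≤ (1 + m⁻¹) ^ (-p) * m ^ (-p) :=
        mul_le_mul_of_nonneg_right hbern (rpow_nonneg hm.le _)
    _ = ((1 + m⁻¹) * m) ^ (-p) := (mul_rpow (by positivity) hm.le).symm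
    _ = (m + 1) ^ (-p) := by rw [add_mul, inv_mul_cancel₀ hm.ne', one_mul, add_comm]

theorem le_rpow_neg_mul_of_le_one_sub_div_mul {e : ℕ → ℝ} {p : ℝ} (hp0 : 0 ≤ p) (hp1 : p ≤ 1)
    (he0 : 0 ≤ e 0) (he : ∀ n : ℕ, e (n + 1) ≤ (1 - p / ((n : ℝ) + 1)) * e n) (n : ℕ) :
    e n ≤ ((n : ℝ) + 1) ^ (-p) * e 0 := by
  induction n with
  | zero => simp
  | succ n ih =>
    have hm : (1 : ℝ) ≤ (n : ℝ) + 1 := by linarith [n.cast_nonneg (α := ℝ)]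
    have hfactor : 0 ≤ 1 - p / ((n : ℝ) + 1) := by
      rw [sub_nonneg, div_le_one (by linarith)]; linarith
    calc e (n + 1) ≤ (1 - p / ((n : ℝ) + 1)) * e n := he n
      _ ≤ (1 - p / ((n : ℝ) + 1)) * (((n : ℝ) + 1) ^ (-p) * e 0) :=
        mul_le_mul_of_nonneg_left ih hfactor
      _ = ((1 - p / ((n : ℝ) + 1)) * ((n : ℝ) + 1) ^ (-p)) * e 0 := by ring
      _ ≤ (((n : ℝ) + 1) + 1) ^ (-p) * e 0 :=
        mul_le_mul_of_nonneg_right (one_sub_div_mul_rpow_neg_le (by linarith) hp0) he0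
      _ = (((n + 1 : ℕ) : ℝ) + 1) ^ (-p) * e 0 := by push_cast; rfl

theorem stmt_19 (c : ℝ) (hc : 1 ≤ c) (G : ℕ → ℝ) (Ginf : ℝ) (h0 : Ginf ≤ G 0)
    (hdec : ∀ n : ℕ, G (n + 1) - Ginf ≤ (1 - 1 / (c * ((n : ℝ) + 1))) * (G n - Ginf)) :
    ∀ n : ℕ, 1 ≤ n → G n - Ginf ≤ (n : ℝ) ^ (-1 / c) * (G 0 - Ginf) := by
  intro n hn
  have hc0 : 0 < c := by linarith
  have hp0 : 0 ≤ 1 / c := by positivity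
  have hp1 : 1 / c ≤ 1 := by rwa [div_le_one hc0]
  have hcontract : ∀ k : ℕ, G (k + 1) - Ginf ≤ (1 - 1 / c / ((k : ℝ) + 1)) * (G k - Ginf) := by
    simpa only [div_div] using hdec
  have hn1 : (1 : ℝ) ≤ n := by exact_mod_cast hn
  calc G n - Ginf ≤ ((n : ℝ) + 1) ^ (-(1 / c)) * (G 0 - Ginf) :=
        le_rpow_neg_mul_of_le_one_sub_div_mul (e := fun k => G k - Ginf) hp0 hp1
          (sub_nonneg.mpr h0) hcontract n
    _ ≤ (n : ℝ) ^ (-(1 / c)) * (G 0 - Ginf) :=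
        mul_le_mul_of_nonneg_right
          (rpow_le_rpow_of_nonpos (by linarith) (by linarith) (by linarith)) (sub_nonneg.mpr h0)
    _ = (n : ℝ) ^ (-1 / c) * (G 0 - Ginf) := by rw [neg_div]
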